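/- Suppose δ_j ≤ 1/2 − ε for some ε ∈ (0,1/2). Then there is a constant C depending only on ε such that |λ̂_j − λ_j| ≤ ‖P_j E P_j‖_2 + C ‖P_j E |R_j|^{1/2}‖_2^2. -/

import Mathlib

/-!
A Weyl-type min-max argument, with a vector in `span {u_k : k ≥ j} ∩ span {û_k : k ≤ j}`, gives
`|λ̂_j - λ_j| ≤ δ_j g_j ≤ (1/2 - ε) g_j`, so `λ̂_j` stays at distance at least `(1/2 + ε) |λ_k - λ_j|`
from every other `λ_k`. Write `v = û_j = β u_j + w` with `w ⊥ u_j`, and let `Y = ‖|R_j|^{-1/2} w‖` and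
`s = ‖P_j E |R_j|^{1/2}‖_2`. The eigen-equation `(λ̂_j - λ_k) ⟨u_k, v⟩ = ⟨u_k, E v⟩` for `k ≠ j`,
Cauchy-Schwarz, and the fact that `δ_j` bounds `E` as a bilinear form in the norm
`‖(|R_j|^{-1/2} + g_j^{1/2} P_j) ·‖` give `(1/2 + ε) Y² ≤ |β| s Y + δ_j Y²`, hence `2 ε Y ≤ |β| s`.
Finally `(λ̂_j - λ_j) β = β ⟨u_j, E u_j⟩ + ⟨w, E u_j⟩` and `|⟨w, E u_j⟩| ≤ s Y ≤ |β| s² / (2 ε)`,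
so `C = 1 / (2 ε)`; `β ≠ 0` because `β = 0` would force `Y = 0`, i.e. `v = 0`.
-/

open Matrix Finset

noncomputable def opNorm {d : ℕ} (A : Matrix (Fin d) (Fin d) ℝ) : ℝ :=
  ‖Matrix.toEuclideanCLM (𝕜 := ℝ) A‖

noncomputable def hsNorm {d : ℕ} (A : Matrix (Fin d) (Fin d) ℝ) : ℝ :=
  Real.sqrt (Matrix.trace (Aᵀ * A))

noncomputable def proj {d : ℕ} (u : Fin d → ℝ) : Matrix (Fin d) (Fin d) ℝ :=
  Matrix.vecMulVec u u

/-- `|R_j|^{1/2}` : square root of the absolute value of the reduced resolvent. -/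
noncomputable def sqrtAbsRes {d : ℕ} (lam : Fin d → ℝ) (u : Fin d → Fin d → ℝ)
    (j : Fin d) : Matrix (Fin d) (Fin d) ℝ :=
  ∑ k ∈ Finset.univ.filter (fun k => k ≠ j), (Real.sqrt |lam k - lam j|)⁻¹ • proj (u k)

/-- `|R_j|^{-1/2}`. -/
noncomputable def invSqrtAbsRes {d : ℕ} (lam : Fin d → ℝ) (u : Fin d → Fin d → ℝ)
    (j : Fin d) : Matrix (Fin d) (Fin d) ℝ :=
  ∑ k ∈ Finset.univ.filter (fun k => k ≠ j), Real.sqrt |lam k - lam j| • proj (u k)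

/-- the reduced resolvent `R_j`. -/
noncomputable def res {d : ℕ} (lam : Fin d → ℝ) (u : Fin d → Fin d → ℝ)
    (j : Fin d) : Matrix (Fin d) (Fin d) ℝ :=
  ∑ k ∈ Finset.univ.filter (fun k => k ≠ j), (lam k - lam j)⁻¹ • proj (u k)

/-- `δ_j`. -/
noncomputable def delta {d : ℕ} (lam : Fin d → ℝ) (u : Fin d → Fin d → ℝ) (j : Fin d)
    (gj : ℝ) (E : Matrix (Fin d) (Fin d) ℝ) : ℝ :=
  opNorm ((sqrtAbsRes lam u j + (Real.sqrt gj)⁻¹ • proj (u j)) * E *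
    (sqrtAbsRes lam u j + (Real.sqrt gj)⁻¹ • proj (u j)))

/-- `δ'_j`. -/
noncomputable def delta' {d : ℕ} (lam : Fin d → ℝ) (u : Fin d → Fin d → ℝ) (j : Fin d)
    (gj : ℝ) (E : Matrix (Fin d) (Fin d) ℝ) : ℝ :=
  max (opNorm (sqrtAbsRes lam u j * E * sqrtAbsRes lam u j))
    (max ((Real.sqrt gj)⁻¹ * hsNorm (sqrtAbsRes lam u j * E * proj (u j)))
      (gj⁻¹ * hsNorm (proj (u j) * E * proj (u j))))

namespace SpectralPerturbation

variable {d : ℕ}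

lemma sum_eq_add_sum_ne {M : Type*} [AddCommMonoid M] (j : Fin d) (f : Fin d → M) :
    ∑ k, f k = f j + ∑ k with k ≠ j, f k := by
  rw [filter_ne', add_sum_erase _ _ (mem_univ j)]

lemma abs_dotProduct_mulVec_le (A : Matrix (Fin d) (Fin d) ℝ) (x y : Fin d → ℝ) :
    |x ⬝ᵥ A *ᵥ y| ≤ opNorm A * √(x ⬝ᵥ x) * √(y ⬝ᵥ y) := by
  have hnorm : ∀ z : Fin d → ℝ, ‖WithLp.toLp 2 z‖ = √(z ⬝ᵥ z) := fun z => by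
    rw [norm_eq_sqrt_real_inner, EuclideanSpace.inner_eq_star_dotProduct]
    simp
  have hinner : x ⬝ᵥ A *ᵥ y =
      inner ℝ (WithLp.toLp 2 x) (toEuclideanCLM (𝕜 := ℝ) A (WithLp.toLp 2 y)) := by
    rw [toEuclideanCLM_toLp, EuclideanSpace.inner_eq_star_dotProduct]
    simp [dotProduct_comm]
  rw [hinner, ← hnorm, ← hnorm, opNorm, mul_comm _ ‖WithLp.toLp 2 x‖, mul_assoc]
  exact (abs_real_inner_le_norm _ _).trans (by gcongr; exact ContinuousLinearMap.le_opNorm _ _)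

lemma sum_smul_proj_mulVec {u : Fin d → Fin d → ℝ} (s : Finset (Fin d)) (c : Fin d → ℝ)
    (x : Fin d → ℝ) :
    (∑ k ∈ s, c k • proj (u k)) *ᵥ x = ∑ k ∈ s, (c k * (u k ⬝ᵥ x)) • u k := by
  simp only [sum_mulVec, smul_mulVec, proj, vecMulVec_mulVec, op_smul_eq_smul, smul_smul]

lemma transpose_sum_smul_proj (u : Fin d → Fin d → ℝ) (s : Finset (Fin d)) (c : Fin d → ℝ) :
    (∑ k ∈ s, c k • proj (u k))ᵀ = ∑ k ∈ s, c k • proj (u k) := by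
  simp only [transpose_sum, transpose_smul, proj, transpose_vecMulVec]

lemma proj_mul_of_isSymm {E : Matrix (Fin d) (Fin d) ℝ} (hE : E.IsSymm) (x : Fin d → ℝ) :
    proj x * E = vecMulVec x (E *ᵥ x) := by
  rw [proj, vecMulVec_mul, ← mulVec_transpose, hE.eq]

lemma hsNorm_vecMulVec (a b : Fin d → ℝ) :
    hsNorm (vecMulVec a b) = √((a ⬝ᵥ a) * (b ⬝ᵥ b)) := by
  rw [hsNorm, transpose_vecMulVec, vecMulVec_mul_vecMulVec, trace_vecMulVec, dotProduct_smul,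
    smul_eq_mul]

lemma dotProduct_sum_smul_proj_mulVec (u : Fin d → Fin d → ℝ) (c : Fin d → ℝ) (x : Fin d → ℝ) :
    x ⬝ᵥ (∑ k, c k • proj (u k)) *ᵥ x = ∑ k, c k * (u k ⬝ᵥ x) ^ 2 := by
  rw [sum_smul_proj_mulVec, dotProduct_sum]
  exact sum_congr rfl fun k _ => by rw [dotProduct_smul, smul_eq_mul, dotProduct_comm]; ring

lemma exists_ne_zero_orthogonal (v v' : Fin d → Fin d → ℝ) (j : Fin d) :
    ∃ x : Fin d → ℝ, x ≠ 0 ∧ (∀ k, k < j → v k ⬝ᵥ x = 0) ∧ ∀ k, j < k → v' k ⬝ᵥ x = 0 := by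
  let M : Matrix (Fin d) (Fin d) ℝ :=
    of fun k i => if k < j then v k i else if j < k then v' k i else 0
  obtain ⟨x, hx, hMx⟩ :=
    exists_mulVec_eq_zero_iff.mpr (det_eq_zero_of_row_eq_zero (A := M) j fun i => by simp [M])
  refine ⟨x, hx, fun k hk => ?_, fun k hk => ?_⟩
  · simpa [M, mulVec, dotProduct, hk] using congrFun hMx k
  · simpa [M, mulVec, dotProduct, hk, not_lt.mpr hk.le] using congrFun hMx k

lemma sum_abs_mul_le_sqrt_mul_sqrt {ι : Type*} (s : Finset ι) {r : ι → ℝ} (hr : ∀ k ∈ s, 0 < r k)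
    (a e : ι → ℝ) :
    ∑ k ∈ s, |a k * e k| ≤ √(∑ k ∈ s, r k * a k ^ 2) * √(∑ k ∈ s, e k ^ 2 / r k) := by
  have h := Real.sum_mul_le_sqrt_mul_sqrt s (fun k => √(r k) * |a k|) (fun k => |e k| / √(r k))
  have hfg : ∀ k ∈ s, √(r k) * |a k| * (|e k| / √(r k)) = |a k * e k| := fun k hk => by
    rw [abs_mul]; field_simp [(Real.sqrt_pos.mpr (hr k hk)).ne']
  have hf : ∀ k ∈ s, (√(r k) * |a k|) ^ 2 = r k * a k ^ 2 := fun k hk => by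
    rw [mul_pow, Real.sq_sqrt (hr k hk).le, sq_abs]
  have hg : ∀ k ∈ s, (|e k| / √(r k)) ^ 2 = e k ^ 2 / r k := fun k hk => by
    rw [div_pow, Real.sq_sqrt (hr k hk).le, sq_abs]
  rwa [sum_congr rfl hfg, sum_congr rfl hf, sum_congr rfl hg] at h

lemma one_sub_mul_abs_le_abs_sub {a b μ c g : ℝ} (hc : 0 ≤ c) (hg : g ≤ |a - b|)
    (hμ : |μ - b| ≤ c * g) : (1 - c) * |a - b| ≤ |μ - a| := by
  have h1 : |a - b| ≤ |μ - a| + |μ - b| := by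
    rw [abs_sub_comm μ]; exact abs_sub_le _ _ _
  nlinarith [mul_le_mul_of_nonneg_left hg hc]

section Orthonormal

variable {u : Fin d → Fin d → ℝ} (hON : ∀ k l, u k ⬝ᵥ u l = if k = l then (1 : ℝ) else 0)
include hON

lemma dotProduct_sum_smul (l : Fin d) (s : Finset (Fin d)) (m : Fin d → ℝ) :
    u l ⬝ᵥ ∑ k ∈ s, m k • u k = if l ∈ s then m l else 0 := by
  simp [dotProduct_sum, dotProduct_smul, hON, sum_ite_eq]

lemma sum_smul_dotProduct_self (s : Finset (Fin d)) (m : Fin d → ℝ) :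
    (∑ k ∈ s, m k • u k) ⬝ᵥ ∑ k ∈ s, m k • u k = ∑ k ∈ s, m k ^ 2 := by
  rw [sum_dotProduct]
  refine sum_congr rfl fun k hk => ?_
  rw [smul_dotProduct, dotProduct_sum_smul hON, if_pos hk, smul_eq_mul, sq]

lemma sum_dotProduct_smul (x : Fin d → ℝ) : ∑ k, (u k ⬝ᵥ x) • u k = x := by
  have hU : (of u)ᵀ * of u = 1 := mul_eq_one_comm.mp <| by
    ext k l
    simp only [mul_apply, transpose_apply, of_apply, one_apply, ← hON k l, dotProduct]
  calc ∑ k, (u k ⬝ᵥ x) • u k = (of u)ᵀ *ᵥ (of u *ᵥ x) := by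
        rw [mulVec_eq_sum]
        simp only [transpose_transpose, op_smul_eq_smul]
        rfl
    _ = x := by rw [mulVec_mulVec, hU, one_mulVec]

lemma sum_dotProduct_mul_dotProduct (x y : Fin d → ℝ) :
    ∑ k, (u k ⬝ᵥ x) * (u k ⬝ᵥ y) = x ⬝ᵥ y := by
  conv_rhs => rw [← sum_dotProduct_smul hON x]
  simp only [sum_dotProduct, smul_dotProduct, smul_eq_mul]

lemma sum_sq_dotProduct (x : Fin d → ℝ) : ∑ k, (u k ⬝ᵥ x) ^ 2 = x ⬝ᵥ x := by
  simp only [sq, sum_dotProduct_mul_dotProduct hON]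

lemma mul_dotProduct_self_le_of_orthogonal {c : Fin d → ℝ} {j : Fin d} {x : Fin d → ℝ}
    (hx : ∀ k, c k < c j → u k ⬝ᵥ x = 0) :
    c j * (x ⬝ᵥ x) ≤ x ⬝ᵥ (∑ k, c k • proj (u k)) *ᵥ x := by
  rw [dotProduct_sum_smul_proj_mulVec, ← sum_sq_dotProduct hON, mul_sum]
  refine sum_le_sum fun k _ => ?_
  by_cases hk : c k < c j
  · simp [hx k hk]
  · exact mul_le_mul_of_nonneg_right (not_lt.mp hk) (sq_nonneg _)

lemma dotProduct_mulVec_eq_of_orthogonal {c : Fin d → ℝ} {j : Fin d} {x : Fin d → ℝ}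
    (hx : ∀ k, c j < c k → u k ⬝ᵥ x = 0) :
    x ⬝ᵥ (∑ k, c k • proj (u k)) *ᵥ x =
      c j * (x ⬝ᵥ x) - ∑ k with k ≠ j, |c k - c j| * (u k ⬝ᵥ x) ^ 2 := by
  have hterm : ∀ k, c k * (u k ⬝ᵥ x) ^ 2 =
      c j * (u k ⬝ᵥ x) ^ 2 - |c k - c j| * (u k ⬝ᵥ x) ^ 2 := fun k => by
    by_cases hk : c j < c k
    · simp [hx k hk]
    · rw [abs_of_nonpos (by linarith [not_lt.mp hk])]; ring
  have hoff : ∑ k with k ≠ j, |c k - c j| * (u k ⬝ᵥ x) ^ 2 =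
      ∑ k, |c k - c j| * (u k ⬝ᵥ x) ^ 2 := by
    rw [sum_eq_add_sum_ne j (fun k => |c k - c j| * (u k ⬝ᵥ x) ^ 2)]
    simp
  rw [hoff, dotProduct_sum_smul_proj_mulVec, ← sum_sq_dotProduct hON, mul_sum, ← sum_sub_distrib]
  exact sum_congr rfl fun k _ => hterm k

lemma sum_smul_proj_mulVec_self (c : Fin d → ℝ) (l : Fin d) :
    (∑ k, c k • proj (u k)) *ᵥ u l = c l • u l := by
  simp [sum_smul_proj_mulVec, dotProduct_comm, hON, ite_smul]

end Orthonormal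

/-- `|R_j|^{1/2} + g^{-1/2} P_j = ∑ k, (gapWeight k)^{-1/2} P_k`, so `δ_j` is the norm of `E` as a
bilinear form for the norm `√(weightedSq ·)`. -/
def gapWeight (lam : Fin d → ℝ) (j : Fin d) (g : ℝ) (k : Fin d) : ℝ :=
  if k = j then g else |lam k - lam j|

def weightedSq (lam : Fin d → ℝ) (u : Fin d → Fin d → ℝ) (j : Fin d) (g : ℝ)
    (x : Fin d → ℝ) : ℝ :=
  ∑ k, gapWeight lam j g k * (u k ⬝ᵥ x) ^ 2

section Weighted

variable {lam : Fin d → ℝ} {u : Fin d → Fin d → ℝ} {j : Fin d} {g : ℝ}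

lemma gapWeight_pos (hg : 0 < g) (hgap : ∀ k, k ≠ j → g ≤ |lam k - lam j|) (k : Fin d) :
    0 < gapWeight lam j g k := by
  unfold gapWeight
  split_ifs with hk
  exacts [hg, hg.trans_le (hgap k hk)]

lemma gapWeight_neg : gapWeight (-lam) j g = gapWeight lam j g := by
  ext k
  simp [gapWeight, neg_add_eq_sub, abs_sub_comm]

lemma weightedSq_eq (x : Fin d → ℝ) :
    weightedSq lam u j g x =
      g * (u j ⬝ᵥ x) ^ 2 + ∑ k with k ≠ j, |lam k - lam j| * (u k ⬝ᵥ x) ^ 2 := by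
  rw [weightedSq, sum_eq_add_sum_ne j]
  congr 1
  · simp [gapWeight]
  · exact sum_congr rfl fun k hk => by rw [gapWeight, if_neg (mem_filter.mp hk).2]

lemma sqrtAbsRes_add_smul_proj :
    sqrtAbsRes lam u j + (√g)⁻¹ • proj (u j) = ∑ k, (√(gapWeight lam j g k))⁻¹ • proj (u k) := by
  rw [sum_eq_add_sum_ne j, sqrtAbsRes, add_comm]
  congr 1
  · simp [gapWeight]
  · exact sum_congr rfl fun k hk => by rw [gapWeight, if_neg (mem_filter.mp hk).2]

lemma delta_neg (E : Matrix (Fin d) (Fin d) ℝ) : delta (-lam) u j g (-E) = delta lam u j g E := by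
  simp only [delta, sqrtAbsRes, Pi.neg_apply, neg_sub_neg, abs_sub_comm (lam j), Matrix.mul_neg,
    Matrix.neg_mul, opNorm, map_neg, norm_neg]

lemma delta_nonneg {E : Matrix (Fin d) (Fin d) ℝ} : 0 ≤ delta lam u j g E := norm_nonneg _

lemma weightedSq_nonneg (hw : ∀ k, 0 < gapWeight lam j g k) (x : Fin d → ℝ) :
    0 ≤ weightedSq lam u j g x :=
  sum_nonneg fun k _ => mul_nonneg (hw k).le (sq_nonneg _)

variable (hON : ∀ k l, u k ⬝ᵥ u l = if k = l then (1 : ℝ) else 0)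
  (hw : ∀ k, 0 < gapWeight lam j g k)
include hON hw

lemma abs_dotProduct_mulVec_le_delta (E : Matrix (Fin d) (Fin d) ℝ) (x y : Fin d → ℝ) :
    |x ⬝ᵥ E *ᵥ y| ≤
      delta lam u j g E * √(weightedSq lam u j g x) * √(weightedSq lam u j g y) := by
  set T := ∑ k, (√(gapWeight lam j g k))⁻¹ • proj (u k)
  have hlift : ∀ z, ∃ z', T *ᵥ z' = z ∧ z' ⬝ᵥ z' = weightedSq lam u j g z := fun z => by
    refine ⟨∑ k, (√(gapWeight lam j g k) * (u k ⬝ᵥ z)) • u k, ?_, ?_⟩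
    · conv_rhs => rw [← sum_dotProduct_smul hON z]
      rw [sum_smul_proj_mulVec]
      refine sum_congr rfl fun k _ => ?_
      rw [dotProduct_sum_smul hON, if_pos (mem_univ k), ← mul_assoc,
        inv_mul_cancel₀ (Real.sqrt_pos.mpr (hw k)).ne', one_mul]
    · rw [sum_smul_dotProduct_self hON, weightedSq]
      refine sum_congr rfl fun k _ => ?_
      rw [mul_pow, Real.sq_sqrt (hw k).le]
  obtain ⟨x', rfl, hx'⟩ := hlift x
  obtain ⟨y', rfl, hy'⟩ := hlift y
  have hT : Tᵀ = T := transpose_sum_smul_proj u _ _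
  have hxy : x' ⬝ᵥ (T * E * T) *ᵥ y' = T *ᵥ x' ⬝ᵥ E *ᵥ T *ᵥ y' := by
    rw [← mulVec_mulVec, ← mulVec_mulVec, dotProduct_mulVec, ← mulVec_transpose, hT]
  rw [delta, sqrtAbsRes_add_smul_proj, ← hx', ← hy', ← hxy]
  exact abs_dotProduct_mulVec_le _ _ _

lemma sum_abs_mul_le_delta_mul_weightedSq (E : Matrix (Fin d) (Fin d) ℝ) (x : Fin d → ℝ) :
    ∑ k, |(u k ⬝ᵥ x) * (u k ⬝ᵥ E *ᵥ x)| ≤ delta lam u j g E * weightedSq lam u j g x := by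
  set σ : Fin d → ℝ := fun k => SignType.sign ((u k ⬝ᵥ x) * (u k ⬝ᵥ E *ᵥ x))
  set y := ∑ k, (σ k * (u k ⬝ᵥ x)) • u k
  have hy : y ⬝ᵥ E *ᵥ x = ∑ k, |(u k ⬝ᵥ x) * (u k ⬝ᵥ E *ᵥ x)| := by
    simp only [y, σ, sum_dotProduct, smul_dotProduct, smul_eq_mul, mul_assoc, sign_mul_self]
  have hWy : weightedSq lam u j g y ≤ weightedSq lam u j g x := by
    refine sum_le_sum fun k _ => mul_le_mul_of_nonneg_left ?_ (hw k).le
    rw [dotProduct_sum_smul hON, if_pos (mem_univ k), mul_pow]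
    refine mul_le_of_le_one_left (sq_nonneg _) ?_
    rcases lt_trichotomy ((u k ⬝ᵥ x) * (u k ⬝ᵥ E *ᵥ x)) 0 with h | h | h <;> simp [σ, h]
  calc ∑ k, |(u k ⬝ᵥ x) * (u k ⬝ᵥ E *ᵥ x)| = y ⬝ᵥ E *ᵥ x := hy.symm
    _ ≤ delta lam u j g E * √(weightedSq lam u j g y) * √(weightedSq lam u j g x) :=
      (le_abs_self _).trans (abs_dotProduct_mulVec_le_delta hON hw E y x)
    _ ≤ delta lam u j g E * √(weightedSq lam u j g x) * √(weightedSq lam u j g x) := by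
      gcongr
      exact delta_nonneg
    _ = delta lam u j g E * weightedSq lam u j g x := by
      rw [mul_assoc, Real.mul_self_sqrt (weightedSq_nonneg hw x)]

lemma sum_ne_abs_mul_le_delta_mul_sum (E : Matrix (Fin d) (Fin d) ℝ) (v : Fin d → ℝ) :
    ∑ k with k ≠ j, |(u k ⬝ᵥ v) * (u k ⬝ᵥ E *ᵥ (v - (u j ⬝ᵥ v) • u j))| ≤
      delta lam u j g E * ∑ k with k ≠ j, |lam k - lam j| * (u k ⬝ᵥ v) ^ 2 := by
  set w := v - (u j ⬝ᵥ v) • u j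
  have hwk : ∀ k, k ≠ j → u k ⬝ᵥ w = u k ⬝ᵥ v := fun k hk => by
    rw [dotProduct_sub, dotProduct_smul, hON, if_neg hk, smul_zero, sub_zero]
  have hwj : u j ⬝ᵥ w = 0 := by
    rw [dotProduct_sub, dotProduct_smul, hON, if_pos rfl, smul_eq_mul, mul_one, sub_self]
  have hWw : weightedSq lam u j g w = ∑ k with k ≠ j, |lam k - lam j| * (u k ⬝ᵥ v) ^ 2 := by
    rw [weightedSq_eq, hwj, sq, mul_zero, mul_zero, zero_add]
    exact sum_congr rfl fun k hk => by rw [hwk k (mem_filter.mp hk).2]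
  rw [← hWw]
  refine le_trans ?_ (sum_abs_mul_le_delta_mul_weightedSq hON hw E w)
  rw [sum_congr rfl fun k hk => by rw [← hwk k (mem_filter.mp hk).2]]
  exact sum_le_sum_of_subset_of_nonneg (filter_subset _ _) fun _ _ _ => abs_nonneg _

end Weighted

section Weyl

variable {lam lamh : Fin d → ℝ} {u uh : Fin d → Fin d → ℝ} {j : Fin d} {g : ℝ}
  {E : Matrix (Fin d) (Fin d) ℝ}
  (hON : ∀ k l, u k ⬝ᵥ u l = if k = l then (1 : ℝ) else 0)
  (hONh : ∀ k l, uh k ⬝ᵥ uh l = if k = l then (1 : ℝ) else 0)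
  (hw : ∀ k, 0 < gapWeight lam j g k)
  (hdecomp : ∑ k, lam k • proj (u k) + E = ∑ k, lamh k • proj (uh k))
include hON hONh hw hdecomp

lemma le_add_delta_mul_of_orthogonal (hδ : delta lam u j g E ≤ 1) {x : Fin d → ℝ} (hx : x ≠ 0)
    (hu : ∀ k, lam j < lam k → u k ⬝ᵥ x = 0) (huh : ∀ k, lamh k < lamh j → uh k ⬝ᵥ x = 0) :
    lamh j ≤ lam j + delta lam u j g E * g := by
  set δ := delta lam u j g E
  set D := ∑ k with k ≠ j, |lam k - lam j| * (u k ⬝ᵥ x) ^ 2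
  have hxx : 0 < x ⬝ᵥ x := by simpa using dotProduct_star_self_pos_iff.mpr hx
  have hhat := mul_dotProduct_self_le_of_orthogonal hONh huh
  have hsig : x ⬝ᵥ (∑ k, lam k • proj (u k)) *ᵥ x = lam j * (x ⬝ᵥ x) - D :=
    dotProduct_mulVec_eq_of_orthogonal hON hu
  have hsplit : x ⬝ᵥ (∑ k, lamh k • proj (uh k)) *ᵥ x =
      x ⬝ᵥ (∑ k, lam k • proj (u k)) *ᵥ x + x ⬝ᵥ E *ᵥ x := by
    rw [← hdecomp, add_mulVec, dotProduct_add]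
  have hE : x ⬝ᵥ E *ᵥ x ≤ δ * (g * (u j ⬝ᵥ x) ^ 2 + D) := by
    have := abs_dotProduct_mulVec_le_delta hON hw E x x
    rw [mul_assoc, Real.mul_self_sqrt (weightedSq_nonneg hw x), weightedSq_eq] at this
    exact le_of_abs_le this
  have hD : 0 ≤ D := sum_nonneg fun k _ => by positivity
  have haj : (u j ⬝ᵥ x) ^ 2 ≤ x ⬝ᵥ x := by
    rw [← sum_sq_dotProduct hON]
    exact single_le_sum (f := fun k => (u k ⬝ᵥ x) ^ 2) (fun k _ => sq_nonneg _) (mem_univ j)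
  have hg : 0 < g := by simpa [gapWeight] using hw j
  have hδ0 : 0 ≤ δ := delta_nonneg
  -- `(λ̂_j - λ_j) ‖x‖² ≤ δ g (u_j ⬝ x)² - (1 - δ) D ≤ δ g ‖x‖²`
  refine le_of_mul_le_mul_right ?_ hxx
  linarith [mul_nonneg (sub_nonneg.mpr hδ) hD, mul_le_mul_of_nonneg_left haj (mul_nonneg hδ0 hg.le)]

lemma abs_sub_le_delta_mul (hlam : Antitone lam) (hlamh : Antitone lamh)
    (hδ : delta lam u j g E ≤ 1) : |lamh j - lam j| ≤ delta lam u j g E * g := by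
  rw [abs_sub_le_iff]
  constructor
  · obtain ⟨x, hx, hu, huh⟩ := exists_ne_zero_orthogonal u uh j
    have := le_add_delta_mul_of_orthogonal hON hONh hw hdecomp hδ hx
      (fun k hk => hu k (lt_of_not_ge fun h => (hlam h).not_gt hk))
      (fun k hk => huh k (lt_of_not_ge fun h => (hlamh h).not_gt hk))
    linarith
  -- the lower bound is the upper bound for `-Σ`, `-E` and `-Σ̂`
  · obtain ⟨x, hx, huh, hu⟩ := exists_ne_zero_orthogonal uh u j
    have hdecomp' : ∑ k, (-lam) k • proj (u k) + -E = ∑ k, (-lamh) k • proj (uh k) := by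
      simp only [Pi.neg_apply, neg_smul, sum_neg_distrib, ← neg_add, hdecomp]
    have hw' : ∀ k, 0 < gapWeight (-lam) j g k := by rwa [gapWeight_neg]
    have hδ' : delta (-lam) u j g (-E) ≤ 1 := by rwa [delta_neg]
    have := le_add_delta_mul_of_orthogonal hON hONh hw' hdecomp' hδ' hx
      (fun k hk => hu k (lt_of_not_ge fun h => (hlam h).not_gt (neg_lt_neg_iff.mp hk)))
      (fun k hk => huh k (lt_of_not_ge fun h => (hlamh h).not_gt (neg_lt_neg_iff.mp hk)))
    rw [delta_neg] at this
    simp only [Pi.neg_apply] at this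
    linarith

end Weyl

section Eigenpair

variable {lam : Fin d → ℝ} {u : Fin d → Fin d → ℝ} {j : Fin d} {g : ℝ}
  {E : Matrix (Fin d) (Fin d) ℝ}
  (hON : ∀ k l, u k ⬝ᵥ u l = if k = l then (1 : ℝ) else 0)
include hON

variable {μ : ℝ} {v : Fin d → ℝ} (hv : (∑ k, lam k • proj (u k) + E) *ᵥ v = μ • v)
include hv

lemma sub_mul_dotProduct_eq (k : Fin d) : (μ - lam k) * (u k ⬝ᵥ v) = u k ⬝ᵥ E *ᵥ v := by
  have := congrArg (u k ⬝ᵥ ·) hv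
  simp only [add_mulVec, dotProduct_add, sum_smul_proj_mulVec, dotProduct_sum_smul hON,
    if_pos (mem_univ k), dotProduct_smul, smul_eq_mul] at this
  linarith

variable (hg : 0 < g) (hgap : ∀ k, k ≠ j → g ≤ |lam k - lam j|) {ε : ℝ}
  (hδ : delta lam u j g E ≤ 1 / 2 - ε) (hμ : |μ - lam j| ≤ (1 / 2 - ε) * g)
include hg hgap hδ hμ

lemma two_mul_mul_sqrt_sum_le :
    2 * ε * √(∑ k with k ≠ j, |lam k - lam j| * (u k ⬝ᵥ v) ^ 2) ≤
      |u j ⬝ᵥ v| * √(∑ k with k ≠ j, (u k ⬝ᵥ E *ᵥ u j) ^ 2 / |lam k - lam j|) := by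
  have hw := gapWeight_pos hg hgap
  have hr : ∀ k ∈ univ.filter (· ≠ j), 0 < |lam k - lam j| := fun k hk =>
    hg.trans_le (hgap k (mem_filter.mp hk).2)
  set β := u j ⬝ᵥ v
  set Y2 := ∑ k with k ≠ j, |lam k - lam j| * (u k ⬝ᵥ v) ^ 2
  set s := √(∑ k with k ≠ j, (u k ⬝ᵥ E *ᵥ u j) ^ 2 / |lam k - lam j|)
  set w := v - β • u j
  have hsplit : ∀ k, u k ⬝ᵥ E *ᵥ v = β * (u k ⬝ᵥ E *ᵥ u j) + u k ⬝ᵥ E *ᵥ w := fun k => by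
    simp [w, mulVec_sub, mulVec_smul, dotProduct_sub]
  have hsep : ∀ k, k ≠ j → (1 / 2 + ε) * |lam k - lam j| ≤ |μ - lam k| := fun k hk => by
    have := one_sub_mul_abs_le_abs_sub (delta_nonneg.trans hδ) (hgap k hk) hμ
    linarith
  have hcs := sum_abs_mul_le_sqrt_mul_sqrt _ hr (fun k => u k ⬝ᵥ v) (fun k => u k ⬝ᵥ E *ᵥ u j)
  have hcross : ∑ k with k ≠ j, |(u k ⬝ᵥ v) * (u k ⬝ᵥ E *ᵥ w)| ≤ delta lam u j g E * Y2 :=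
    sum_ne_abs_mul_le_delta_mul_sum hON hw E v
  have hY : (1 / 2 + ε) * Y2 ≤ |β| * (√Y2 * s) + delta lam u j g E * Y2 := by
    calc (1 / 2 + ε) * Y2
        ≤ ∑ k with k ≠ j, (|β| * |(u k ⬝ᵥ v) * (u k ⬝ᵥ E *ᵥ u j)|
            + |(u k ⬝ᵥ v) * (u k ⬝ᵥ E *ᵥ w)|) := by
          rw [mul_sum]
          refine sum_le_sum fun k hk => ?_
          have h1 : |μ - lam k| * (u k ⬝ᵥ v) ^ 2 = |u k ⬝ᵥ v| * |u k ⬝ᵥ E *ᵥ v| := by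
            rw [← sub_mul_dotProduct_eq hON hv, abs_mul, ← sq_abs (u k ⬝ᵥ v)]; ring
          have h2 : |u k ⬝ᵥ v| * |u k ⬝ᵥ E *ᵥ v| ≤ |β| * |(u k ⬝ᵥ v) * (u k ⬝ᵥ E *ᵥ u j)|
              + |(u k ⬝ᵥ v) * (u k ⬝ᵥ E *ᵥ w)| := by
            rw [hsplit, abs_mul, abs_mul, mul_left_comm, ← abs_mul β, ← mul_add]
            exact mul_le_mul_of_nonneg_left (abs_add_le _ _) (abs_nonneg _)
          nlinarith [hsep k (mem_filter.mp hk).2, sq_nonneg (u k ⬝ᵥ v)]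
      _ ≤ |β| * (√Y2 * s) + delta lam u j g E * Y2 := by
          rw [sum_add_distrib, ← mul_sum]
          gcongr
  have hY2 : 0 ≤ Y2 := sum_nonneg fun k _ => by positivity
  have hYY : 2 * ε * (√Y2 * √Y2) ≤ |β| * s * √Y2 := by
    rw [Real.mul_self_sqrt hY2]; nlinarith
  rcases (Real.sqrt_nonneg Y2).eq_or_lt with h0 | hpos
  · rw [← h0, mul_zero]; positivity
  · nlinarith

lemma dotProduct_ne_zero_of_mulVec_eq_smul (hε : 0 < ε) (hv0 : v ≠ 0) : u j ⬝ᵥ v ≠ 0 := by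
  intro hβ
  have hB := two_mul_mul_sqrt_sum_le hON hv hg hgap hδ hμ
  rw [hβ, abs_zero, zero_mul] at hB
  have hY : ∑ k with k ≠ j, |lam k - lam j| * (u k ⬝ᵥ v) ^ 2 = 0 :=
    (Real.sqrt_eq_zero (sum_nonneg fun k _ => by positivity)).mp
      (by nlinarith [Real.sqrt_nonneg (∑ k with k ≠ j, |lam k - lam j| * (u k ⬝ᵥ v) ^ 2)])
  have hcoord : ∀ k, u k ⬝ᵥ v = 0 := fun k => by
    by_cases hk : k = j
    · rw [hk, hβ]
    · have hk' : k ∈ univ.filter (· ≠ j) := mem_filter.mpr ⟨mem_univ k, hk⟩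
      have := (sum_eq_zero_iff_of_nonneg fun k _ => by positivity).mp hY k hk'
      simpa [(hg.trans_le (hgap k hk)).ne'] using this
  exact hv0 (by rw [← sum_dotProduct_smul hON v]; simp [hcoord])

lemma abs_sub_le_of_mulVec_eq_smul (hε : 0 < ε) (hE : E.IsSymm) (hv0 : v ≠ 0) :
    |μ - lam j| ≤ |u j ⬝ᵥ E *ᵥ u j| +
      (2 * ε)⁻¹ * ∑ k with k ≠ j, (u k ⬝ᵥ E *ᵥ u j) ^ 2 / |lam k - lam j| := by
  have hr : ∀ k ∈ univ.filter (· ≠ j), 0 < |lam k - lam j| := fun k hk =>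
    hg.trans_le (hgap k (mem_filter.mp hk).2)
  have hB := two_mul_mul_sqrt_sum_le hON hv hg hgap hδ hμ
  have hβ := dotProduct_ne_zero_of_mulVec_eq_smul hON hv hg hgap hδ hμ hε hv0
  set β := u j ⬝ᵥ v
  set Y2 := ∑ k with k ≠ j, |lam k - lam j| * (u k ⬝ᵥ v) ^ 2
  set S := ∑ k with k ≠ j, (u k ⬝ᵥ E *ᵥ u j) ^ 2 / |lam k - lam j|
  have hS : 0 ≤ S := sum_nonneg fun k hk => div_nonneg (sq_nonneg _) (hr k hk).le
  have hkey : (μ - lam j) * β = β * (u j ⬝ᵥ E *ᵥ u j) +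
      ∑ k with k ≠ j, (u k ⬝ᵥ v) * (u k ⬝ᵥ E *ᵥ u j) := by
    rw [sub_mul_dotProduct_eq hON hv, dotProduct_mulVec, ← mulVec_transpose, hE.eq,
      ← sum_dotProduct_mul_dotProduct hON, sum_eq_add_sum_ne j]
    simp only [β, mul_comm (u _ ⬝ᵥ E *ᵥ u j)]
  have hoff : |∑ k with k ≠ j, (u k ⬝ᵥ v) * (u k ⬝ᵥ E *ᵥ u j)| ≤ |β| * ((2 * ε)⁻¹ * S) := by
    calc |∑ k with k ≠ j, (u k ⬝ᵥ v) * (u k ⬝ᵥ E *ᵥ u j)|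
        ≤ √Y2 * √S := (abs_sum_le_sum_abs _ _).trans (sum_abs_mul_le_sqrt_mul_sqrt _ hr _ _)
      _ ≤ |β| * √S / (2 * ε) * √S := by
          gcongr
          rw [le_div_iff₀ (by positivity)]
          linarith
      _ = |β| * ((2 * ε)⁻¹ * S) := by
          rw [div_mul_eq_mul_div, mul_assoc, Real.mul_self_sqrt hS]
          ring
  refine le_of_mul_le_mul_right ?_ (abs_pos.mpr hβ)
  calc |μ - lam j| * |β| = |β * (u j ⬝ᵥ E *ᵥ u j) +
        ∑ k with k ≠ j, (u k ⬝ᵥ v) * (u k ⬝ᵥ E *ᵥ u j)| := by rw [← abs_mul, hkey]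
    _ ≤ |β| * |u j ⬝ᵥ E *ᵥ u j| + |β| * ((2 * ε)⁻¹ * S) :=
      (abs_add_le _ _).trans (by rw [abs_mul]; linarith)
    _ = (|u j ⬝ᵥ E *ᵥ u j| + (2 * ε)⁻¹ * S) * |β| := by ring

end Eigenpair

section HilbertSchmidt

variable {u : Fin d → Fin d → ℝ} (hON : ∀ k l, u k ⬝ᵥ u l = if k = l then (1 : ℝ) else 0)
  {E : Matrix (Fin d) (Fin d) ℝ} (hE : E.IsSymm) (j : Fin d)
include hON hE

lemma hsNorm_proj_mul_mul_proj : hsNorm (proj (u j) * E * proj (u j)) = |u j ⬝ᵥ E *ᵥ u j| := by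
  rw [proj_mul_of_isSymm hE, proj, vecMulVec_mul_vecMulVec, hsNorm_vecMulVec, dotProduct_smul,
    smul_dotProduct, hON, if_pos rfl, smul_eq_mul, smul_eq_mul, one_mul, mul_one,
    dotProduct_comm, Real.sqrt_mul_self_eq_abs]

lemma sq_hsNorm_proj_mul_mul_sqrtAbsRes (lam : Fin d → ℝ) :
    hsNorm (proj (u j) * E * sqrtAbsRes lam u j) ^ 2 =
      ∑ k with k ≠ j, (u k ⬝ᵥ E *ᵥ u j) ^ 2 / |lam k - lam j| := by
  rw [proj_mul_of_isSymm hE, vecMulVec_mul, ← mulVec_transpose, sqrtAbsRes,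
    transpose_sum_smul_proj, sum_smul_proj_mulVec, hsNorm_vecMulVec, sum_smul_dotProduct_self hON,
    hON, if_pos rfl, one_mul, Real.sq_sqrt (sum_nonneg fun k _ => sq_nonneg _)]
  exact sum_congr rfl fun k _ => by
    rw [mul_pow, inv_pow, Real.sq_sqrt (abs_nonneg _), dotProduct_comm, inv_mul_eq_div]

end HilbertSchmidt

end SpectralPerturbation

open SpectralPerturbation

theorem stmt10_general (ε : ℝ) (hε0 : 0 < ε) :
    ∃ C : ℝ, 0 < C ∧
      ∀ {d : ℕ} (lam : Fin d → ℝ) (u : Fin d → Fin d → ℝ)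
    (hON : ∀ k l, u k ⬝ᵥ u l = if k = l then (1 : ℝ) else 0)
    (hlam : Antitone lam)
    (E : Matrix (Fin d) (Fin d) ℝ) (hE : E.IsSymm)
    (j : Fin d) (gj : ℝ) (hgj_pos : 0 < gj)
    (hgj : IsLeast {x : ℝ | ∃ k, k ≠ j ∧ x = |lam k - lam j|} gj)
    (lamh : Fin d → ℝ) (uh : Fin d → Fin d → ℝ)
    (hONh : ∀ k l, uh k ⬝ᵥ uh l = if k = l then (1 : ℝ) else 0)
    (hlamh : Antitone lamh)
    (hdecomp : (∑ k, lam k • proj (u k)) + E = ∑ k, lamh k • proj (uh k))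
        (hdelta : delta lam u j gj E ≤ 1 / 2 - ε),
        |lamh j - lam j| ≤
          hsNorm (proj (u j) * E * proj (u j)) +
            C * hsNorm (proj (u j) * E * sqrtAbsRes lam u j) ^ 2 := by
  refine ⟨(2 * ε)⁻¹, by positivity, ?_⟩
  intro d lam u hON hlam E hE j gj hgj_pos hgj lamh uh hONh hlamh hdecomp hdelta
  have hgap : ∀ k, k ≠ j → gj ≤ |lam k - lam j| := fun k hk => hgj.2 ⟨k, hk, rfl⟩
  have hweyl : |lamh j - lam j| ≤ (1 / 2 - ε) * gj :=
    (abs_sub_le_delta_mul hON hONh (gapWeight_pos hgj_pos hgap) hdecomp hlam hlamh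
      (by linarith)).trans (mul_le_mul_of_nonneg_right hdelta hgj_pos.le)
  have heig : (∑ k, lam k • proj (u k) + E) *ᵥ uh j = lamh j • uh j := by
    rw [hdecomp, sum_smul_proj_mulVec_self hONh]
  have huh : uh j ≠ 0 := fun h => by simpa [h] using hONh j j
  rw [hsNorm_proj_mul_mul_proj hON hE, sq_hsNorm_proj_mul_mul_sqrtAbsRes hON hE]
  exact abs_sub_le_of_mulVec_eq_smul hON heig hgj_pos hgap hdelta hweyl hε0 hE huh

theorem stmt10 (ε : ℝ) (hε0 : 0 < ε) (hε1 : ε < 1 / 2) :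
    ∃ C : ℝ, 0 < C ∧
      ∀ {d : ℕ} (lam : Fin d → ℝ) (u : Fin d → Fin d → ℝ)
    (hON : ∀ k l, u k ⬝ᵥ u l = if k = l then (1 : ℝ) else 0)
    (hlam : Antitone lam)
    (E : Matrix (Fin d) (Fin d) ℝ) (hE : E.IsSymm)
    (j : Fin d) (gj : ℝ) (hgj_pos : 0 < gj)
    (hgj : IsLeast {x : ℝ | ∃ k, k ≠ j ∧ x = |lam k - lam j|} gj)
    (lamh : Fin d → ℝ) (uh : Fin d → Fin d → ℝ)
    (hONh : ∀ k l, uh k ⬝ᵥ uh l = if k = l then (1 : ℝ) else 0)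
    (hlamh : Antitone lamh)
    (hdecomp : (∑ k, lam k • proj (u k)) + E = ∑ k, lamh k • proj (uh k))
        (hdelta : delta lam u j gj E ≤ 1 / 2 - ε),
        |lamh j - lam j| ≤
          hsNorm (proj (u j) * E * proj (u j)) +
            C * hsNorm (proj (u j) * E * sqrtAbsRes lam u j) ^ 2 :=
  stmt10_general ε hε0
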